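/- arXiv:2503.14609 — 5 statements merged into one kernel-verified Lean document; each statement's English description precedes it below -/
import Mathlib

section
/- Let w be a word in positive integers satisfying the shifted lattice condition. Then for every i > 1, between any two occurrences of i in w there is an occurrence of i−1, and for every i ≥ 1, between any two occurrences of i in w there is an occurrence of i+1. -/
def ShiftedLattice (w : List ℕ) : Prop :=
  ∀ s : List ℕ, s <:+ w → ∀ i : ℕ, 1 ≤ i →
    s.count (i + 1) ≤ s.count i ∧ s.count i ≤ s.count (i + 1) + 1

private lemma count_drop_succ (w : List ℕ) (v a : ℕ) (ha : a < w.length) :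
    (w.drop a).count v = (w.drop (a+1)).count v + (if w[a] = v then 1 else 0) := by
  rw [List.drop_eq_getElem_cons ha, List.count_cons]
  simp [beq_iff_eq]

private lemma count_drop_le (w : List ℕ) (v a b : ℕ) (hab : a ≤ b) :
    (w.drop b).count v ≤ (w.drop a).count v := by
  have : w.drop b = (w.drop a).drop (b - a) := by
    rw [List.drop_drop]; congr 1; omega
  rw [this]
  exact (List.drop_suffix _ _).sublist.count_le _

private lemma count_drop_eq (w : List ℕ) (v a b : ℕ) (hab : a ≤ b) (hb : b ≤ w.length)
    (hnv : ∀ c, a ≤ c → c < b → w[c]? ≠ some v) :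
    (w.drop a).count v = (w.drop b).count v := by
  induction b, hab using Nat.le_induction with
  | base => rfl
  | succ b hab ih =>
    have hbl : b < w.length := by omega
    have h1 : (w.drop a).count v = (w.drop b).count v := by
      apply ih (by omega)
      intro c h1 h2
      exact hnv c h1 (by omega)
    have hv : w[b] ≠ v := by
      intro hv
      exact hnv b hab (by omega) (by rw [List.getElem?_eq_getElem hbl, hv])
    rw [h1, count_drop_succ w v b hbl, if_neg hv]
    omega

/-- In a shifted lattice word, any two occurrences of the same letter `i` at positions
`a < b` with no occurrence of `v` strictly between them lead to count relations. -/
private lemma count_key (w : List ℕ) (i v a b : ℕ) (hab : a < b)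
    (hbl : b < w.length) (hav : w[a]'(by omega) = i) (hbv : w[b] = i) (hvi : v ≠ i)
    (hnv : ∀ c, a < c → c < b → w[c]? ≠ some v) :
    (w.drop a).count v = (w.drop (b+1)).count v ∧
    (w.drop (b+1)).count i + 2 ≤ (w.drop a).count i := by
  have hal : a < w.length := by omega
  constructor
  · apply count_drop_eq w v a (b+1) (by omega) (by omega)
    intro c h1 h2 hc
    rcases eq_or_lt_of_le h1 with rfl | h1
    · rw [List.getElem?_eq_getElem hal, hav] at hc
      exact hvi (Option.some.inj hc).symm
    rcases Nat.lt_or_ge c b with h2' | h2'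
    · exact hnv c h1 h2' hc
    · have : c = b := by omega
      subst this
      rw [List.getElem?_eq_getElem hbl, hbv] at hc
      exact hvi (Option.some.inj hc).symm
  · have e1 : (w.drop a).count i = (w.drop (a+1)).count i + 1 := by
      rw [count_drop_succ w i a hal, if_pos hav]
    have e2 : (w.drop b).count i = (w.drop (b+1)).count i + 1 := by
      rw [count_drop_succ w i b hbl, if_pos hbv]
    have mono : (w.drop b).count i ≤ (w.drop (a+1)).count i :=
      count_drop_le w i (a+1) b (by omega)
    omega

/-- In a shifted lattice word, between any two occurrences of a letter `i > 1` there is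
an occurrence of `i - 1`, and between any two occurrences of any letter `i ≥ 1` there is
an occurrence of `i + 1`. -/
theorem shiftedLattice_between (w : List ℕ) (hpos : ∀ x ∈ w, 1 ≤ x)
    (h : ShiftedLattice w) :
    (∀ i a b : ℕ, 1 < i → a < b → w[a]? = some i → w[b]? = some i →
      ∃ c, a < c ∧ c < b ∧ w[c]? = some (i - 1)) ∧
    (∀ i a b : ℕ, 1 ≤ i → a < b → w[a]? = some i → w[b]? = some i →
      ∃ c, a < c ∧ c < b ∧ w[c]? = some (i + 1)) := by
  constructor
  · intro i a b hi hab ha hb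
    by_contra hc
    push_neg at hc
    obtain ⟨hbl, hbv⟩ := List.getElem?_eq_some_iff.mp hb
    have hal : a < w.length := by omega
    have hav : w[a] = i := by
      rw [List.getElem?_eq_getElem hal] at ha; exact Option.some.inj ha
    obtain ⟨hk1, hk2⟩ := count_key w i (i-1) a b hab hbl hav hbv (by omega)
      (fun c h1 h2 => hc c h1 h2)
    obtain ⟨h1, _⟩ := h (w.drop a) (List.drop_suffix a w) (i-1) (by omega)
    obtain ⟨_, h2⟩ := h (w.drop (b+1)) (List.drop_suffix (b+1) w) (i-1) (by omega)
    rw [Nat.sub_add_cancel (by omega)] at h1 h2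
    omega
  · intro i a b hi hab ha hb
    by_contra hc
    push_neg at hc
    obtain ⟨hbl, hbv⟩ := List.getElem?_eq_some_iff.mp hb
    have hal : a < w.length := by omega
    have hav : w[a] = i := by
      rw [List.getElem?_eq_getElem hal] at ha; exact Option.some.inj ha
    obtain ⟨hk1, hk2⟩ := count_key w i (i+1) a b hab hbl hav hbv (by omega)
      (fun c h1 h2 => hc c h1 h2)
    obtain ⟨h1, _⟩ := h (w.drop (b+1)) (List.drop_suffix (b+1) w) i hi
    obtain ⟨_, h2⟩ := h (w.drop a) (List.drop_suffix a w) i hi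
    omega
end

section
/- Let ν be a strict partition (a strictly decreasing sequence of positive integers ν_1 > ν_2 > ... > ν_ℓ > 0). The barely Yamanouchi word associated to ν, defined as the concatenation seq(ν_ℓ) · seq(ν_{ℓ−1}) · ... · seq(ν_1) where seq(n) = n, n−1, ..., 2, 1, satisfies the shifted lattice condition. -/
/-- `seqW n` is the decreasing word `n, n-1, ..., 2, 1`. -/
def seqW (n : ℕ) : List ℕ := (List.range n).reverse.map (· + 1)

/-- The barely Yamanouchi word of a strict partition `ν = [ν₁, ..., ν_ℓ]` is the
concatenation `seq ν_ℓ · seq ν_{ℓ-1} · ... · seq ν₁`. -/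
def barelyY (ν : List ℕ) : List ℕ := (ν.reverse.map seqW).flatten

/-!
Read the word `barelyY ν` through the increasing list `ν.reverse`. A suffix of a concatenation
of decreasing words `seqW m` is again such a concatenation, indexed by an increasing list `M`
(the first block may be cut down to a shorter `seqW j`). In it the letter `i ≥ 1` occurs once
for every `m ∈ M` with `i ≤ m`, so `#i - #(i+1)` is the multiplicity of `i` in `M`, which is
`0` or `1` because `M` is strictly increasing.
-/

def flatSeqW (L : List ℕ) : List ℕ := (L.map seqW).flatten

@[simp]
lemma flatSeqW_cons (a : ℕ) (L : List ℕ) : flatSeqW (a :: L) = seqW a ++ flatSeqW L := rfl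

lemma barelyY_eq_flatSeqW_reverse (ν : List ℕ) : barelyY ν = flatSeqW ν.reverse := rfl

lemma seqW_succ (n : ℕ) : seqW (n + 1) = (n + 1) :: seqW n := by
  simp [seqW, List.range_succ]

lemma exists_eq_seqW_of_suffix {t : List ℕ} {n : ℕ} (h : t <:+ seqW n) :
    ∃ j ≤ n, t = seqW j := by
  induction n with
  | zero => exact ⟨0, le_rfl, List.eq_nil_of_suffix_nil h⟩
  | succ n ih =>
    rw [seqW_succ, List.suffix_cons_iff] at h
    rcases h with rfl | h
    · exact ⟨n + 1, le_rfl, (seqW_succ n).symm⟩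
    · obtain ⟨j, hj, rfl⟩ := ih h
      exact ⟨j, hj.trans n.le_succ, rfl⟩

lemma List.suffix_or_eq_append_of_suffix_append {α : Type*} {s l₁ l₂ : List α}
    (h : s <:+ l₁ ++ l₂) : s <:+ l₂ ∨ ∃ t, t <:+ l₁ ∧ s = t ++ l₂ := by
  obtain ⟨u, hu⟩ := h
  rcases List.append_eq_append_iff.mp hu with ⟨t, rfl, rfl⟩ | ⟨c, rfl, rfl⟩
  · exact Or.inr ⟨t, ⟨u, rfl⟩, rfl⟩
  · exact Or.inl ⟨c, rfl⟩

lemma exists_eq_flatSeqW_of_suffix {L : List ℕ} (hL : L.IsChain (· < ·)) {s : List ℕ}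
    (hs : s <:+ flatSeqW L) : ∃ M : List ℕ, M.IsChain (· < ·) ∧ s = flatSeqW M := by
  induction L with
  | nil => exact ⟨[], .nil, List.eq_nil_of_suffix_nil hs⟩
  | cons a L ih =>
    obtain ⟨ha, hL⟩ := List.isChain_cons.mp hL
    rcases List.suffix_or_eq_append_of_suffix_append hs with hs | ⟨t, ht, rfl⟩
    · exact ih hL hs
    · obtain ⟨j, hja, rfl⟩ := exists_eq_seqW_of_suffix ht
      rcases j.eq_zero_or_pos with rfl | -
      · exact ⟨L, hL, rfl⟩
      · exact ⟨j :: L, List.isChain_cons.mpr ⟨fun b hb => hja.trans_lt (ha b hb), hL⟩, rfl⟩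

lemma count_seqW {i : ℕ} (hi : 1 ≤ i) (n : ℕ) :
    (seqW n).count i = if i ≤ n then 1 else 0 := by
  induction n with
  | zero => simp [seqW]; omega
  | succ n ih =>
    rw [seqW_succ, List.count_cons, ih]
    split_ifs <;> simp_all <;> omega

lemma count_flatSeqW {i : ℕ} (hi : 1 ≤ i) (L : List ℕ) :
    (flatSeqW L).count i = L.countP (i ≤ ·) := by
  induction L with
  | nil => rfl
  | cons a L ih =>
    rw [flatSeqW_cons, List.count_append, ih, List.countP_cons, count_seqW hi]
    split_ifs <;> simp_all <;> omega

lemma countP_le_eq_countP_succ_le_add_count (i : ℕ) (L : List ℕ) :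
    L.countP (i ≤ ·) = L.countP (i + 1 ≤ ·) + L.count i := by
  induction L with
  | nil => rfl
  | cons a L ih =>
    rw [List.countP_cons, List.countP_cons, List.count_cons, ih]
    rcases Nat.lt_trichotomy a i with h | rfl | h
    · simp [h.not_ge, h.ne, show ¬ i + 1 ≤ a by omega]
    · simp; omega
    · simp [show i + 1 ≤ a from h, h.le, h.ne']; omega

lemma shiftedLattice_flatSeqW {L : List ℕ} (hL : L.IsChain (· < ·)) :
    ShiftedLattice (flatSeqW L) := by
  intro s hs i hi
  obtain ⟨M, hM, rfl⟩ := exists_eq_flatSeqW_of_suffix hL hs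
  have hcount : M.count i ≤ 1 :=
    List.nodup_iff_count_le_one.mp (hM.pairwise.imp ne_of_lt) i
  rw [count_flatSeqW hi, count_flatSeqW (by omega), countP_le_eq_countP_succ_le_add_count i M]
  omega

theorem barelyY_shiftedLattice_general (ν : List ℕ) (hchain : List.Chain' (· > ·) ν) :
    ShiftedLattice (barelyY ν) := by
  rw [barelyY_eq_flatSeqW_reverse]
  exact shiftedLattice_flatSeqW (List.isChain_reverse.mpr hchain)

/-- The barely Yamanouchi word of a strict partition satisfies the shifted lattice
condition. -/
theorem barelyY_shiftedLattice (ν : List ℕ) (hchain : List.Chain' (· > ·) ν)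
    (hpos : ∀ x ∈ ν, 0 < x) :
    ShiftedLattice (barelyY ν) :=
  barelyY_shiftedLattice_general ν hchain
end

section
/- If e is a word satisfying the shifted lattice condition, then the content of e equals the content of the barely Yamanouchi word of some strict partition μ; that is, there exists a strict partition μ = (c_k > c_{k−1} > ... > c_1) such that for each i ≥ 1, the number of occurrences of i in e equals the number of parts of μ that are at least i. -/
/-- The content of a shifted lattice word is the content of the barely Yamanouchi word of
some strict partition: there is a strictly decreasing list `μ` of positive integers such
that for every `i ≥ 1` the number of `i`'s in `e` equals the number of parts of `μ` that
are at least `i`. -/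
theorem shiftedLattice_content (e : List ℕ) (hpos : ∀ x ∈ e, 1 ≤ x)
    (h : ShiftedLattice e) :
    ∃ μ : List ℕ, List.Chain' (· > ·) μ ∧ (∀ x ∈ μ, 0 < x) ∧
      ∀ i : ℕ, 1 ≤ i → e.count i = μ.countP (fun p => decide (i ≤ p)) := by
  set c : ℕ → ℕ := fun i => e.count i with hcdef
  have hc : ∀ i, 1 ≤ i → c (i + 1) ≤ c i ∧ c i ≤ c (i + 1) + 1 :=
    fun i hi => h e (List.suffix_refl e) i hi
  set N := e.sum with hNdef
  have hcN : ∀ i, N + 2 ≤ i → c i = 0 := by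
    intro i hi
    simp only [hcdef]
    rw [List.count_eq_zero]
    intro hmem
    have := List.single_le_sum (l := e) (fun x _ => Nat.zero_le x) i hmem
    omega
  set P : ℕ → Bool := fun j => decide (c (j + 1) < c j) with hPdef
  refine ⟨((List.Ico 1 (N + 2)).filter P).reverse, ?_, ?_, ?_⟩
  · exact List.Pairwise.isChain
      (List.pairwise_reverse.mpr ((List.Ico.pairwise_lt 1 (N + 2)).filter P))
  · intro x hx
    rw [List.mem_reverse, List.mem_filter] at hx
    exact (List.Ico.mem.mp hx.1).1
  · intro i hi
    rw [List.countP_reverse, List.countP_filter]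
    show c i = _
    by_cases hle : i ≤ N + 2
    · have tele : ∀ m, i ≤ m →
          c i = (List.Ico i m).countP P + c m := by
        intro m hm
        induction m, hm using Nat.le_induction with
        | base => simp [List.Ico.self_empty]
        | succ m hm ih =>
          rw [← List.Ico.append_consecutive hm (Nat.le_succ m),
            List.Ico.succ_singleton, List.countP_append, List.countP_singleton]
          have hcm := hc m (le_trans hi hm)
          by_cases hd : c (m + 1) < c m <;> simp [hPdef, hd] at ih ⊢ <;> omega
      have h1 : c i = (List.Ico i (N + 2)).countP P := by
        have := tele (N + 2) hle
        rw [hcN (N + 2) le_rfl] at this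
        omega
      rw [h1, ← List.Ico.append_consecutive hi hle, List.countP_append]
      have h2 : (List.Ico 1 i).countP (fun a => decide (i ≤ a) && P a) = 0 := by
        rw [List.countP_eq_zero]
        intro a ha
        have := (List.Ico.mem.mp ha).2
        simp only [Bool.and_eq_true, decide_eq_true_eq]
        omega
      have h3 : (List.Ico i (N + 2)).countP (fun a => decide (i ≤ a) && P a)
          = (List.Ico i (N + 2)).countP P := by
        apply List.countP_congr
        intro a ha
        have := (List.Ico.mem.mp ha).1
        simp only [Bool.and_eq_true, decide_eq_true_eq]
        tauto
      rw [h2, h3]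
      omega
    · rw [hcN i (by omega), eq_comm, List.countP_eq_zero]
      intro a ha
      have := (List.Ico.mem.mp ha).2
      simp only [Bool.and_eq_true, decide_eq_true_eq]
      omega
end

section
/- Removal of the first shrinking sequence preserves the shifted lattice condition: let w be a shifted lattice word and let d be the subword of w constructed greedily as follows: start at the rightmost occurrence of the maximum letter M of w; having selected an occurrence of value v > 1, next select the closest occurrence of v−1 to its right; stop at value 1. Then the word ŵ obtained from w by deleting the letters of d is also a shifted lattice word. -/
/-!
A suffix of `ŵ` is `w.drop p` with the positions `idx i ≥ p` erased, so its count of `i` is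
`(w.drop p).count i` minus the indicator of `1 ≤ i ≤ M ∧ p ≤ idx i`. That indicator is antitone
in `i` because `idx (i + 1) < idx i`, so the lattice inequalities of `w` transfer directly except
when `i` is erased and `i + 1` is not: `p ≤ idx i` and either `i = M` or `idx (i + 1) < p`.
There we need `#(i+1) + 1 ≤ #i` on `w.drop p`: for `i = M` because `M + 1` does not occur, and
otherwise because no `i` occurs in `[idx (i + 1), p)`, so that this is the lattice inequality of
`w` at the suffix beginning with the letter `i + 1` at `idx (i + 1)`.
-/

namespace List

variable {α : Type*}

section Count

variable [DecidableEq α]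

theorem count_drop (l : List α) (a : α) (p : ℕ) :
    (l.drop p).count a = (l.drop (p + 1)).count a + if l[p]? = some a then 1 else 0 := by
  rcases lt_or_ge p l.length with hp | hp
  · simp only [drop_eq_getElem_cons hp, count_cons, getElem?_eq_getElem hp, Option.some_inj,
      beq_iff_eq]
  · simp [drop_eq_nil_of_le hp, drop_eq_nil_of_le (hp.trans p.le_succ), getElem?_eq_none hp]

theorem count_drop_le_count_drop (l : List α) (a : α) {p q : ℕ} (h : p ≤ q) :
    (l.drop q).count a ≤ (l.drop p).count a :=
  (l.drop_sublist_drop_left h).count_le a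

theorem count_drop_eq_of_forall_ne (l : List α) (a : α) {p q : ℕ} (h : p ≤ q)
    (hne : ∀ j, p ≤ j → j < q → l[j]? ≠ some a) :
    (l.drop p).count a = (l.drop q).count a := by
  induction q, h using Nat.le_induction with
  | base => rfl
  | succ q hpq ih =>
    rw [ih fun j hj hjq => hne j hj (by omega), count_drop,
      if_neg (hne q hpq q.lt_succ_self), add_zero]

end Count

def erasePositions (S : Finset ℕ) (k : ℕ) (w : List α) : List α :=
  ((w.zipIdx k).filter fun x => x.2 ∉ S).map Prod.fst

theorem erasePositions_cons (S : Finset ℕ) (k : ℕ) (a : α) (w : List α) :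
    erasePositions S k (a :: w) =
      if k ∈ S then erasePositions S (k + 1) w else a :: erasePositions S (k + 1) w := by
  by_cases hk : k ∈ S <;> simp [erasePositions, zipIdx_cons, hk]

theorem exists_eq_erasePositions_drop_of_suffix (S : Finset ℕ) {s w : List α} {k : ℕ}
    (hs : s <:+ erasePositions S k w) :
    ∃ p, s = erasePositions S (k + p) (w.drop p) := by
  induction w generalizing k with
  | nil => exact ⟨0, by simpa [erasePositions] using hs⟩
  | cons a w ih =>
    have of_suffix_tail (hs : s <:+ erasePositions S (k + 1) w) :
        ∃ p, s = erasePositions S (k + p) ((a :: w).drop p) := by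
      obtain ⟨p, rfl⟩ := ih hs
      exact ⟨p + 1, by rw [drop_succ_cons, Nat.add_right_comm, Nat.add_assoc]⟩
    rw [erasePositions_cons] at hs
    split_ifs at hs with hk
    · exact of_suffix_tail hs
    · rcases suffix_cons_iff.mp hs with rfl | hs
      · exact ⟨0, by rw [drop_zero, add_zero, erasePositions_cons, if_neg hk]⟩
      · exact of_suffix_tail hs

theorem count_erasePositions_add_countP [DecidableEq α] (S : Finset ℕ) (k : ℕ)
    (w : List α) (a : α) :
    (erasePositions S k w).count a + (w.zipIdx k).countP (fun x => x.1 = a ∧ x.2 ∈ S) =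
      w.count a := by
  induction w generalizing k with
  | nil => simp [erasePositions]
  | cons b w ih =>
    rw [erasePositions_cons, zipIdx_cons, countP_cons, count_cons, ← ih (k + 1)]
    by_cases hk : k ∈ S <;> by_cases hb : b = a <;> simp [hk, hb] <;> omega

theorem mem_zipIdx_drop {x : α × ℕ} {w : List α} {p : ℕ} :
    x ∈ (w.drop p).zipIdx p ↔ p ≤ x.2 ∧ w[x.2]? = some x.1 := by
  rw [mem_zipIdx_iff_le_and_getElem?_sub, getElem?_drop]
  constructor <;> rintro ⟨h, hx⟩ <;> refine ⟨h, ?_⟩ <;> rwa [Nat.add_sub_cancel' h] at *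

theorem nodup_zipIdx (w : List α) (k : ℕ) : (w.zipIdx k).Nodup :=
  Nodup.of_map Prod.snd (by rw [zipIdx_map_snd]; exact nodup_range')

end List

open List

structure IsShrinkingSequence (w : List ℕ) (M : ℕ) (idx : ℕ → ℕ) : Prop where
  getElem?_idx : ∀ v, 1 ≤ v → v ≤ M → w[idx v]? = some v
  idx_succ_lt : ∀ v, 1 ≤ v → v < M → idx (v + 1) < idx v
  getElem?_ne_of_idx_succ_lt_of_lt_idx :
    ∀ v, 1 ≤ v → v < M → ∀ q, idx (v + 1) < q → q < idx v → w[q]? ≠ some v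

namespace IsShrinkingSequence

variable {w : List ℕ} {M : ℕ} {idx : ℕ → ℕ} (hd : IsShrinkingSequence w M idx)
include hd

theorem mem_image_idx_iff {q a : ℕ} (hq : w[q]? = some a) :
    q ∈ (Finset.Icc 1 M).image idx ↔ (1 ≤ a ∧ a ≤ M) ∧ q = idx a := by
  simp only [Finset.mem_image, Finset.mem_Icc]
  constructor
  · rintro ⟨v, hv, rfl⟩
    obtain rfl : a = v := Option.some_inj.mp (hq.symm.trans (hd.getElem?_idx v hv.1 hv.2))
    exact ⟨hv, rfl⟩
  · rintro ⟨ha, rfl⟩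
    exact ⟨a, ha, rfl⟩

theorem countP_zipIdx_drop_mem_image (p i : ℕ) :
    ((w.drop p).zipIdx p).countP (fun x => x.1 = i ∧ x.2 ∈ (Finset.Icc 1 M).image idx) =
      if (1 ≤ i ∧ i ≤ M) ∧ p ≤ idx i then 1 else 0 := by
  by_cases hi : 1 ≤ i ∧ i ≤ M
  · have hidx := hd.getElem?_idx i hi.1 hi.2
    calc _ = ((w.drop p).zipIdx p).count (i, idx i) := by
          refine countP_congr fun x hx => ?_
          rw [mem_zipIdx_drop] at hx
          simp only [decide_eq_true_eq, beq_iff_eq, hd.mem_image_idx_iff hx.2]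
          constructor
          · rintro ⟨rfl, -, h⟩
            exact Prod.ext rfl h
          · rintro rfl
            exact ⟨rfl, hi, rfl⟩
      _ = _ := by
          simp [(nodup_zipIdx _ _).count, mem_zipIdx_drop, hi, hidx]
  · rw [if_neg (by tauto), countP_eq_zero]
    intro x hx
    rw [mem_zipIdx_drop] at hx
    simp only [decide_eq_true_eq, hd.mem_image_idx_iff hx.2]
    rintro ⟨rfl, h, -⟩
    exact hi h

theorem count_erasePositions_drop_add (p i : ℕ) :
    (erasePositions ((Finset.Icc 1 M).image idx) p (w.drop p)).count i +
        (if (1 ≤ i ∧ i ≤ M) ∧ p ≤ idx i then 1 else 0) = (w.drop p).count i := by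
  rw [← hd.countP_zipIdx_drop_mem_image, count_erasePositions_add_countP]

theorem count_drop_succ_add_one_le (h : ShiftedLattice w) (hmax : ∀ x ∈ w, x ≤ M) {k p : ℕ}
    (hk : 1 ≤ k) (hkM : k ≤ M) (hp : k = M ∨ idx (k + 1) < p) (hpk : p ≤ idx k) :
    (w.drop p).count (k + 1) + 1 ≤ (w.drop p).count k := by
  rcases hkM.eq_or_lt with rfl | hkM
  · have hnone : (w.drop p).count (k + 1) = 0 :=
      count_eq_zero.2 fun hmem => by have := hmax _ ((drop_sublist _ _).mem hmem); omega
    have hone := count_drop w k (idx k)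
    rw [if_pos (hd.getElem?_idx k hk le_rfl)] at hone
    have := count_drop_le_count_drop w k hpk
    omega
  · have hp : idx (k + 1) < p := hp.resolve_left hkM.ne
    have hsucc := hd.getElem?_idx (k + 1) (by omega) hkM
    calc (w.drop p).count (k + 1) + 1 ≤ (w.drop (idx (k + 1) + 1)).count (k + 1) + 1 := by
          gcongr
          exact count_drop_le_count_drop w _ hp
      _ = (w.drop (idx (k + 1))).count (k + 1) := by
          rw [count_drop w _ (idx (k + 1)), if_pos hsucc]
      _ ≤ (w.drop (idx (k + 1))).count k := (h _ (drop_suffix _ _) k hk).1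
      _ = (w.drop p).count k := by
          refine count_drop_eq_of_forall_ne w k hp.le fun j hj hjp => ?_
          rcases hj.eq_or_lt with rfl | hj
          · rw [hsucc]
            simp
          · exact hd.getElem?_ne_of_idx_succ_lt_of_lt_idx k hk hkM j hj (by omega)

theorem shiftedLattice_erasePositions (h : ShiftedLattice w) (hmax : ∀ x ∈ w, x ≤ M) :
    ShiftedLattice (erasePositions ((Finset.Icc 1 M).image idx) 0 w) := by
  intro s hs i hi
  obtain ⟨p, rfl⟩ := exists_eq_erasePositions_drop_of_suffix _ hs
  rw [zero_add]
  have e₁ := hd.count_erasePositions_drop_add p i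
  have e₂ := hd.count_erasePositions_drop_add p (i + 1)
  have hl := h _ (w.drop_suffix p) i hi
  split_ifs at e₁ e₂ with h₁ h₂ h₂
  · omega
  · have := hd.count_drop_succ_add_one_le h hmax hi h₁.1.2 (by omega) h₁.2
    omega
  · have := hd.idx_succ_lt i hi (by omega)
    omega
  · omega

end IsShrinkingSequence

theorem remove_shrinking_sequence_shiftedLattice_general (w : List ℕ)
    (h : ShiftedLattice w)
    (M : ℕ) (hmax : ∀ x ∈ w, x ≤ M)
    (idx : ℕ → ℕ)
    (hidxM : w[idx M]? = some M)
    (hstep : ∀ v : ℕ, 1 ≤ v → v < M →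
      idx (v + 1) < idx v ∧ w[idx v]? = some v ∧
        ∀ q : ℕ, idx (v + 1) < q → q < idx v → w[q]? ≠ some v) :
    ShiftedLattice
      ((((w.zipIdx.map Prod.swap).filter
        (fun x => decide (x.1 ∉ (Finset.Icc 1 M).image idx)))).map Prod.snd) := by
  have hd : IsShrinkingSequence w M idx :=
    { getElem?_idx := fun v hv hvM => hvM.eq_or_lt.elim (fun hv => hv ▸ hidxM)
        fun hvM => (hstep v hv hvM).2.1
      idx_succ_lt := fun v hv hvM => (hstep v hv hvM).1
      getElem?_ne_of_idx_succ_lt_of_lt_idx := fun v hv hvM => (hstep v hv hvM).2.2 }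
  have hŵ : ((w.zipIdx.map Prod.swap).filter
      (fun x => decide (x.1 ∉ (Finset.Icc 1 M).image idx))).map Prod.snd =
        erasePositions ((Finset.Icc 1 M).image idx) 0 w := by
    simp only [filter_map, map_map]
    rfl
  rw [hŵ]
  exact hd.shiftedLattice_erasePositions h hmax

/-- Removing the greedily-constructed first shrinking sequence
`M, M-1, ..., 1` (where `M` is the maximum letter, each next letter chosen as the
leftmost occurrence of the next smaller value to the right) from a shifted lattice word
leaves a shifted lattice word. Here `idx v` is the position of the selected occurrence of
the value `v`, for `1 ≤ v ≤ M`. -/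
theorem remove_shrinking_sequence_shiftedLattice (w : List ℕ)
    (hpos : ∀ x ∈ w, 1 ≤ x) (h : ShiftedLattice w)
    (M : ℕ) (hM : M ∈ w) (hmax : ∀ x ∈ w, x ≤ M)
    (idx : ℕ → ℕ)
    (hidxM : w[idx M]? = some M)
    (hMright : ∀ p : ℕ, w[p]? = some M → p ≤ idx M)
    (hstep : ∀ v : ℕ, 1 ≤ v → v < M →
      idx (v + 1) < idx v ∧ w[idx v]? = some v ∧
        ∀ q : ℕ, idx (v + 1) < q → q < idx v → w[q]? ≠ some v) :
    ShiftedLattice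
      ((((w.zipIdx.map Prod.swap).filter
        (fun x => decide (x.1 ∉ (Finset.Icc 1 M).image idx)))).map Prod.snd) :=
  remove_shrinking_sequence_shiftedLattice_general w h M hmax idx hidxM hstep
end

section
/- Greedy decreasing subword in a shifted lattice word reaches 1: if w is a shifted lattice word with maximum letter M, then the greedy procedure—starting from the (unique) occurrence of M and repeatedly choosing the first occurrence of the next smaller value to the right—successfully finds occurrences of M−1, M−2, ..., 1; that is, for each 1 ≤ v < M, after the selected occurrence of v+1 there is an occurrence of v later in the word. -/
/- The suffix of `w` starting at the selected occurrence of `v + 1` contains `v + 1`, hence, by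
the shifted lattice condition `#(v+1) ≤ #v` on suffixes, it also contains `v`; that occurrence
of `v` cannot be the first letter, which is `v + 1`. -/

theorem List.mem_drop_of_getElem?_eq {α : Type*} {l : List α} {k : ℕ} {a : α}
    (hk : l[k]? = some a) : a ∈ l.drop k :=
  List.mem_of_getElem? (by rwa [List.getElem?_drop, Nat.add_zero] : (l.drop k)[0]? = some a)

theorem List.exists_lt_getElem?_eq_of_mem_drop {α : Type*} {l : List α} {k : ℕ} {a b : α}
    (hk : l[k]? = some a) (hb : b ∈ l.drop k) (hba : b ≠ a) :
    ∃ p, k < p ∧ l[p]? = some b := by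
  obtain ⟨j, hj⟩ := List.mem_iff_getElem?.1 hb
  rw [List.getElem?_drop] at hj
  have hj0 : j ≠ 0 := by
    rintro rfl
    exact hba (Option.some.inj (hj.symm.trans hk))
  exact ⟨k + j, by omega, hj⟩

theorem ShiftedLattice.mem_of_succ_mem_suffix {w s : List ℕ} (h : ShiftedLattice w)
    (hs : s <:+ w) {i : ℕ} (hi : 1 ≤ i) (hmem : i + 1 ∈ s) : i ∈ s :=
  List.count_pos_iff.1 <| (List.count_pos_iff.2 hmem).trans_le (h s hs i hi).1

theorem greedy_reaches_one_general (w : List ℕ)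
    (h : ShiftedLattice w)
    (M : ℕ)
    (v : ℕ) (hv1 : 1 ≤ v) (hvM : v < M)
    (idx : ℕ → ℕ)
    (hidxM : w[idx M]? = some M)
    (hstep : ∀ u : ℕ, v + 1 ≤ u → u < M →
      idx (u + 1) < idx u ∧ w[idx u]? = some u ∧
        ∀ q : ℕ, idx (u + 1) < q → q < idx u → w[q]? ≠ some u) :
    ∃ p : ℕ, idx (v + 1) < p ∧ w[p]? = some v := by
  have hsel : w[idx (v + 1)]? = some (v + 1) := by
    rcases (Nat.add_one_le_of_lt hvM).eq_or_lt with hM | hlt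
    · rwa [hM]
    · exact (hstep (v + 1) le_rfl hlt).2.1
  have hv : v ∈ w.drop (idx (v + 1)) :=
    h.mem_of_succ_mem_suffix (List.drop_suffix _ w) hv1 (List.mem_drop_of_getElem?_eq hsel)
  exact List.exists_lt_getElem?_eq_of_mem_drop hsel hv (Nat.succ_ne_self v).symm

/-- The greedy decreasing subword in a shifted lattice word reaches 1: if the greedy
selection (starting at the occurrence of the maximum letter `M`, each step picking the
leftmost occurrence of the next smaller value to the right) has been carried out down to
the value `v + 1`, then there is an occurrence of `v` strictly to the right of the
selected occurrence of `v + 1`. -/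
theorem greedy_reaches_one (w : List ℕ) (hpos : ∀ x ∈ w, 1 ≤ x)
    (h : ShiftedLattice w)
    (M : ℕ) (hM : M ∈ w) (hmax : ∀ x ∈ w, x ≤ M)
    (v : ℕ) (hv1 : 1 ≤ v) (hvM : v < M)
    (idx : ℕ → ℕ)
    (hidxM : w[idx M]? = some M)
    (hstep : ∀ u : ℕ, v + 1 ≤ u → u < M →
      idx (u + 1) < idx u ∧ w[idx u]? = some u ∧
        ∀ q : ℕ, idx (u + 1) < q → q < idx u → w[q]? ≠ some u) :
    ∃ p : ℕ, idx (v + 1) < p ∧ w[p]? = some v :=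
  greedy_reaches_one_general w h M v hv1 hvM idx hidxM hstep
end
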